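/- If σ* is an equilibrium strategy, σ is a monotone strategy, and σ* is more selective than σ (σ*(s) ≤ σ(s) for all s ∈ S), then total surplus decreases when buyers jointly deviate to the less selective strategy: Π(σ) ≤ Π(σ*). In particular, if σ* and σ** are both equilibrium strategies with σ** more selective than σ*, then Π(σ*) ≤ Π(σ**). -/
import Mathlib


open Finset Filter Topology

noncomputable section

/-- Probability that a single buyer rejects the seller, given conditional signal
distribution `p` and strategy `σ`: `r_θ(σ) = 1 - Σ_s p_θ(s)·σ(s)`. -/
def rej {m : ℕ} (p σ : Fin m → ℝ) : ℝ := 1 - ∑ s, p s * σ s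

/-- `ν_θ(σ) = (1/n)·Σ_{k=0}^{n-1} r_θ(σ)^k`: probability of being visited. -/
def visit (n : ℕ) {m : ℕ} (p σ : Fin m → ℝ) : ℝ :=
  (1 / (n : ℝ)) * ∑ k ∈ Finset.range n, rej p σ ^ k

/-- Interim belief `Ψ(σ) = ρ·ν_H(σ) / (ρ·ν_H(σ) + (1-ρ)·ν_L(σ))`. -/
def interim (ρ : ℝ) (n : ℕ) {m : ℕ} (pL pH σ : Fin m → ℝ) : ℝ :=
  ρ * visit n pH σ / (ρ * visit n pH σ + (1 - ρ) * visit n pL σ)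

/-- Posterior belief `Q_ψ(s) = ψ·p_H(s) / (ψ·p_H(s) + (1-ψ)·p_L(s))`. -/
def post {m : ℕ} (ψ : ℝ) (pL pH : Fin m → ℝ) (s : Fin m) : ℝ :=
  ψ * pH s / (ψ * pH s + (1 - ψ) * pL s)

/-- A strategy maps each signal to an acceptance probability in `[0,1]`. -/
def IsStrategy {m : ℕ} (σ : Fin m → ℝ) : Prop := ∀ s, 0 ≤ σ s ∧ σ s ≤ 1

/-- `σ` is an equilibrium strategy: with `ψ* = Ψ(σ)`, accept for sure when the
posterior exceeds `c`, reject for sure when it falls below `c`. -/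
def IsEquilibrium (ρ c : ℝ) (n : ℕ) {m : ℕ} (pL pH σ : Fin m → ℝ) : Prop :=
  IsStrategy σ ∧
  ∀ s : Fin m,
    (c < post (interim ρ n pL pH σ) pL pH s → σ s = 1) ∧
    (post (interim ρ n pL pH σ) pL pH s < c → σ s = 0)

/-- Total surplus `Π(σ) = (1-c)·ρ·(1-r_H(σ)^n) - c·(1-ρ)·(1-r_L(σ)^n)`. -/
def surplus (ρ c : ℝ) (n : ℕ) {m : ℕ} (pL pH σ : Fin m → ℝ) : ℝ :=
  (1 - c) * ρ * (1 - rej pH σ ^ n) - c * (1 - ρ) * (1 - rej pL σ ^ n)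

/-- The most selective equilibrium strategy. -/
def MostSelective (ρ c : ℝ) (n : ℕ) {m : ℕ} (pL pH σ : Fin m → ℝ) : Prop :=
  IsEquilibrium ρ c n pL pH σ ∧
  ∀ σ' : Fin m → ℝ, IsEquilibrium ρ c n pL pH σ' → ∀ s, σ s ≤ σ' s

/-- The least selective equilibrium strategy. -/
def LeastSelective (ρ c : ℝ) (n : ℕ) {m : ℕ} (pL pH σ : Fin m → ℝ) : Prop :=
  IsEquilibrium ρ c n pL pH σ ∧
  ∀ σ' : Fin m → ℝ, IsEquilibrium ρ c n pL pH σ' → ∀ s, σ' s ≤ σ s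

/-- An experiment: `p_L, p_H` are probability mass functions with full joint support,
indexed so that likelihood ratios are nondecreasing. -/
def IsExperiment {m : ℕ} (pL pH : Fin m → ℝ) : Prop :=
  (∀ s, 0 ≤ pL s) ∧ (∀ s, 0 ≤ pH s) ∧
  (∑ s, pL s = 1) ∧ (∑ s, pH s = 1) ∧
  (∀ s, 0 < pL s + pH s) ∧
  (∀ i j : Fin m, i ≤ j → pH i * pL j ≤ pH j * pL i)

/-- A strategy is monotone: a positive acceptance probability at `s_i` forces sure
acceptance at every signal with strictly higher likelihood ratio. -/
def MonotoneStrategy {m : ℕ} (pL pH σ : Fin m → ℝ) : Prop :=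
  ∀ i j : Fin m, 0 < σ i → pH i * pL j < pH j * pL i → σ j = 1


lemma double_sum_le' {α : Type*} (s : Finset α) (F G : α → α → ℝ)
    (h : ∀ i ∈ s, ∀ j ∈ s, F i j + F j i ≤ G i j + G j i) :
    ∑ i ∈ s, ∑ j ∈ s, F i j ≤ ∑ i ∈ s, ∑ j ∈ s, G i j := by
  have h2 : ∑ i ∈ s, ∑ j ∈ s, (F i j + F j i) ≤ ∑ i ∈ s, ∑ j ∈ s, (G i j + G j i) :=
    Finset.sum_le_sum fun i hi => Finset.sum_le_sum fun j hj => h i hi j hj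
  simp only [Finset.sum_add_distrib] at h2
  have hF : (∑ i ∈ s, ∑ j ∈ s, F j i) = ∑ i ∈ s, ∑ j ∈ s, F i j := Finset.sum_comm
  have hG : (∑ i ∈ s, ∑ j ∈ s, G j i) = ∑ i ∈ s, ∑ j ∈ s, G i j := Finset.sum_comm
  linarith

lemma sum_pσ_nonneg {m : ℕ} {p σ : Fin m → ℝ} (hp : ∀ s, 0 ≤ p s) (hσ : IsStrategy σ) :
    0 ≤ ∑ s, p s * σ s := Finset.sum_nonneg fun s _ => mul_nonneg (hp s) (hσ s).1

lemma sum_pσ_le_one {m : ℕ} {p σ : Fin m → ℝ} (hp : ∀ s, 0 ≤ p s) (hp1 : ∑ s, p s = 1)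
    (hσ : IsStrategy σ) : ∑ s, p s * σ s ≤ 1 := by
  calc ∑ s, p s * σ s ≤ ∑ s, p s :=
        Finset.sum_le_sum fun s _ => mul_le_of_le_one_right (hp s) (hσ s).2
    _ = 1 := hp1

lemma rej_nonneg {m : ℕ} {p σ : Fin m → ℝ} (hp : ∀ s, 0 ≤ p s) (hp1 : ∑ s, p s = 1)
    (hσ : IsStrategy σ) : 0 ≤ rej p σ := by
  have := sum_pσ_le_one hp hp1 hσ; simp only [rej]; linarith

lemma rej_le_one {m : ℕ} {p σ : Fin m → ℝ} (hp : ∀ s, 0 ≤ p s) (hσ : IsStrategy σ) :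
    rej p σ ≤ 1 := by
  have := sum_pσ_nonneg hp hσ; simp only [rej]; linarith

lemma one_le_geom_sum {n : ℕ} (hn : 1 ≤ n) {a : ℝ} (ha : 0 ≤ a) :
    (1:ℝ) ≤ ∑ k ∈ Finset.range n, a ^ k := by
  have := Finset.single_le_sum (f := fun k => a ^ k)
    (fun i _ => pow_nonneg ha i) (Finset.mem_range.2 hn)
  simpa using this

lemma visit_pos {n : ℕ} (hn : 1 ≤ n) {m : ℕ} {p σ : Fin m → ℝ}
    (hp : ∀ s, 0 ≤ p s) (hp1 : ∑ s, p s = 1) (hσ : IsStrategy σ) :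
    0 < visit n p σ := by
  have h1 : (1:ℝ) ≤ ∑ k ∈ Finset.range n, rej p σ ^ k :=
    one_le_geom_sum hn (rej_nonneg hp hp1 hσ)
  have hn0 : (0:ℝ) < n := by exact_mod_cast hn
  simp only [visit]
  positivity

lemma mono_sum_le {m : ℕ} {pL pH σ : Fin m → ℝ} (hE : IsExperiment pL pH)
    (hσ : IsStrategy σ) (hmono : MonotoneStrategy pL pH σ) :
    ∑ s, pL s * σ s ≤ ∑ s, pH s * σ s := by
  obtain ⟨hL0, hH0, hL1, hH1, hLH, hMLR⟩ := hE
  have key : ∀ i ∈ (Finset.univ : Finset (Fin m)), ∀ j ∈ (Finset.univ : Finset (Fin m)),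
      (0:ℝ) + 0 ≤ σ i * (pH i * pL j - pL i * pH j) + σ j * (pH j * pL i - pL j * pH i) := by
    intro i _ j _
    rcases lt_trichotomy (pH j * pL i - pH i * pL j) 0 with hd | hd | hd
    · have hji : σ j ≤ σ i := by
        by_cases h0 : 0 < σ j
        · have := hmono j i h0 (by linarith)
          rw [this]; exact (hσ j).2
        · push_neg at h0
          exact le_trans h0 (hσ i).1
      nlinarith
    · have e : σ i * (pH i * pL j - pL i * pH j) + σ j * (pH j * pL i - pL j * pH i)
          = (σ j - σ i) * (pH j * pL i - pH i * pL j) := by ring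
      rw [hd, mul_zero] at e
      linarith
    · have hij : σ i ≤ σ j := by
        by_cases h0 : 0 < σ i
        · have := hmono i j h0 (by linarith)
          rw [this]; exact (hσ i).2
        · push_neg at h0
          exact le_trans h0 (hσ j).1
      nlinarith
  have h := double_sum_le' Finset.univ (fun _ _ => (0:ℝ))
    (fun i j => σ i * (pH i * pL j - pL i * pH j)) key
  simp only [Finset.sum_const_zero] at h
  have heq : ∑ i, ∑ j, σ i * (pH i * pL j - pL i * pH j)
      = (∑ s, pH s * σ s) - ∑ s, pL s * σ s := by
    have : ∀ i : Fin m, ∑ j, σ i * (pH i * pL j - pL i * pH j)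
        = σ i * pH i * (∑ j, pL j) - σ i * pL i * (∑ j, pH j) := by
      intro i
      rw [Finset.mul_sum, Finset.mul_sum, ← Finset.sum_sub_distrib]
      exact Finset.sum_congr rfl fun j _ => by ring
    simp only [this, hL1, hH1, mul_one]
    rw [Finset.sum_sub_distrib]
    congr 1 <;> exact Finset.sum_congr rfl fun s _ => by ring
  linarith [heq ▸ h]

lemma pair_ineq {a a' b' : ℝ} (ha : 0 ≤ a) (haa : a ≤ a') (hb0 : 0 ≤ b') (hb1 : b' ≤ 1)
    (n k j : ℕ) (hjk : j ≤ k) :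
    a ^ k * b' ^ (n - 1 - k) * a' ^ j + a ^ j * b' ^ (n - 1 - j) * a' ^ k
      ≤ a' ^ k * b' ^ (n - 1 - k) * a ^ j + a' ^ j * b' ^ (n - 1 - j) * a ^ k := by
  have ha' : 0 ≤ a' := le_trans ha haa
  have hX : a ^ k * a' ^ j ≤ a' ^ k * a ^ j := by
    obtain ⟨e, rfl⟩ := Nat.exists_eq_add_of_le hjk
    rw [pow_add, pow_add]
    have h1 : a ^ e ≤ a' ^ e := pow_le_pow_left₀ ha haa e
    nlinarith [pow_nonneg ha j, pow_nonneg ha' j, mul_nonneg (pow_nonneg ha j) (pow_nonneg ha' j)]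
  have hY : b' ^ (n - 1 - j) ≤ b' ^ (n - 1 - k) :=
    pow_le_pow_of_le_one hb0 hb1 (Nat.sub_le_sub_left hjk (n - 1))
  nlinarith [mul_nonneg (sub_nonneg.2 hX) (sub_nonneg.2 hY)]

lemma geom_ratio (n : ℕ) {a a' b b' : ℝ} (ha : 0 ≤ a) (haa : a ≤ a')
    (hb : 0 ≤ b) (hbb : b ≤ b') (hb1 : b' ≤ 1) :
    (∑ k ∈ Finset.range n, a ^ k * b ^ (n - 1 - k)) * (∑ k ∈ Finset.range n, a' ^ k)
      ≤ (∑ k ∈ Finset.range n, a' ^ k * b' ^ (n - 1 - k)) * (∑ k ∈ Finset.range n, a ^ k) := by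
  have ha' : 0 ≤ a' := ha.trans haa
  have hb' : 0 ≤ b' := hb.trans hbb
  have step1 : (∑ k ∈ Finset.range n, a ^ k * b ^ (n - 1 - k))
      ≤ ∑ k ∈ Finset.range n, a ^ k * b' ^ (n - 1 - k) :=
    Finset.sum_le_sum fun k _ =>
      mul_le_mul_of_nonneg_left (pow_le_pow_left₀ hb hbb _) (pow_nonneg ha k)
  have hsa' : 0 ≤ ∑ k ∈ Finset.range n, a' ^ k :=
    Finset.sum_nonneg fun k _ => pow_nonneg ha' k
  refine le_trans (mul_le_mul_of_nonneg_right step1 hsa') ?_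
  rw [Finset.sum_mul_sum, Finset.sum_mul_sum]
  refine double_sum_le' (Finset.range n)
    (fun k j => a ^ k * b' ^ (n - 1 - k) * a' ^ j)
    (fun k j => a' ^ k * b' ^ (n - 1 - k) * a ^ j) ?_
  intro k _ j _
  rcases le_total j k with h | h
  · exact pair_ineq ha haa hb' hb1 n k j h
  · have := pair_ineq ha haa hb' hb1 n j k h; linarith

lemma interim_facts (ρ : ℝ) (hρ0 : 0 < ρ) (hρ1 : ρ < 1) (n : ℕ) (hn : 1 ≤ n)
    {m : ℕ} {pL pH σ : Fin m → ℝ} (hE : IsExperiment pL pH) (hσ : IsStrategy σ) :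
    0 < interim ρ n pL pH σ ∧ interim ρ n pL pH σ < 1 ∧
    interim ρ n pL pH σ * (ρ * visit n pH σ + (1 - ρ) * visit n pL σ) = ρ * visit n pH σ ∧
    (1 - interim ρ n pL pH σ) * (ρ * visit n pH σ + (1 - ρ) * visit n pL σ)
      = (1 - ρ) * visit n pL σ := by
  obtain ⟨hL0, hH0, hL1, hH1, hLH, hMLR⟩ := hE
  have hνH : 0 < visit n pH σ := visit_pos hn hH0 hH1 hσ
  have hνL : 0 < visit n pL σ := visit_pos hn hL0 hL1 hσ
  have hD : 0 < ρ * visit n pH σ + (1 - ρ) * visit n pL σ := by nlinarith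
  have h1 : interim ρ n pL pH σ * (ρ * visit n pH σ + (1 - ρ) * visit n pL σ)
      = ρ * visit n pH σ := by
    simp only [interim]
    field_simp
  refine ⟨?_, ?_, h1, ?_⟩
  · exact div_pos (mul_pos hρ0 hνH) hD
  · simp only [interim]
    rw [div_lt_one hD]
    nlinarith
  · nlinarith [h1]

lemma post_denom_pos {m : ℕ} {pL pH : Fin m → ℝ} (hL0 : ∀ s, 0 ≤ pL s)
    (hH0 : ∀ s, 0 ≤ pH s) (hLH : ∀ s, 0 < pL s + pH s) {ψ : ℝ}
    (hψ0 : 0 < ψ) (hψ1 : ψ < 1) (s : Fin m) : 0 < ψ * pH s + (1 - ψ) * pL s := by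
  rcases lt_or_ge 0 (pH s) with h | h
  · nlinarith [hL0 s]
  · nlinarith [hLH s, hH0 s, hL0 s]

lemma equil_monotone (ρ c : ℝ) (hρ0 : 0 < ρ) (hρ1 : ρ < 1) (n : ℕ) (hn : 1 ≤ n)
    {m : ℕ} {pL pH σ : Fin m → ℝ} (hE : IsExperiment pL pH)
    (heq : IsEquilibrium ρ c n pL pH σ) : MonotoneStrategy pL pH σ := by
  intro i j h0 hLR
  obtain ⟨hψ0, hψ1, -, -⟩ := interim_facts ρ hρ0 hρ1 n hn hE heq.1
  set ψ := interim ρ n pL pH σ with hψdef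
  obtain ⟨hL0, hH0, hL1, hH1, hLH, hMLR⟩ := hE
  have hdi := post_denom_pos hL0 hH0 hLH hψ0 hψ1 i
  have hdj := post_denom_pos hL0 hH0 hLH hψ0 hψ1 j
  have hQi : c ≤ post ψ pL pH i := by
    by_contra h
    push_neg at h
    have := (heq.2 i).2 h
    linarith
  have hQij : post ψ pL pH i < post ψ pL pH j := by
    simp only [post]
    rw [div_lt_div_iff₀ hdi hdj]
    nlinarith [mul_pos (mul_pos hψ0 (by linarith : (0:ℝ) < 1 - ψ)) (sub_pos.2 hLR)]
  exact (heq.2 j).1 (lt_of_le_of_lt hQi hQij)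

set_option maxHeartbeats 1600000 in
/-- deviating jointly from an equilibrium strategy to a less selective
monotone strategy weakly lowers total surplus; in particular, of two equilibrium
strategies the more selective one yields weakly higher surplus. -/
theorem more_selective_better
    (ρ c : ℝ) (hρ : ρ ∈ Set.Ioo (0:ℝ) 1) (hc : c ∈ Set.Ioo (0:ℝ) 1)
    (n : ℕ) (hn : 1 ≤ n) (m : ℕ) (hm : 1 ≤ m)
    (pL pH : Fin m → ℝ) (hE : IsExperiment pL pH) :
    (∀ σstar σ : Fin m → ℝ, IsEquilibrium ρ c n pL pH σstar →
      IsStrategy σ → MonotoneStrategy pL pH σ → (∀ s, σstar s ≤ σ s) →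
      surplus ρ c n pL pH σ ≤ surplus ρ c n pL pH σstar) ∧
    (∀ σstar σstarstar : Fin m → ℝ, IsEquilibrium ρ c n pL pH σstar →
      IsEquilibrium ρ c n pL pH σstarstar → (∀ s, σstarstar s ≤ σstar s) →
      surplus ρ c n pL pH σstar ≤ surplus ρ c n pL pH σstarstar) := by
  obtain ⟨hρ0, hρ1⟩ := hρ
  obtain ⟨hc0, hc1⟩ := hc
  have main : ∀ σstar σ : Fin m → ℝ, IsEquilibrium ρ c n pL pH σstar →
      IsStrategy σ → MonotoneStrategy pL pH σ → (∀ s, σstar s ≤ σ s) →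
      surplus ρ c n pL pH σ ≤ surplus ρ c n pL pH σstar := by
    intro σs σ heq hσ hmono hle
    have hL0 := hE.1
    have hH0 := hE.2.1
    have hL1 := hE.2.2.1
    have hH1 := hE.2.2.2.1
    have hLH := hE.2.2.2.2.1
    have hσs : IsStrategy σs := heq.1
    have hmonos : MonotoneStrategy pL pH σs := equil_monotone ρ c hρ0 hρ1 n hn hE heq
    obtain ⟨hψ0, hψ1, hψD, h1ψD⟩ := interim_facts ρ hρ0 hρ1 n hn hE hσs
    set ψ := interim ρ n pL pH σs with hψdef
    have hνH : 0 < visit n pH σs := visit_pos hn hH0 hH1 hσs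
    have hνL : 0 < visit n pL σs := visit_pos hn hL0 hL1 hσs
    have hD : 0 < ρ * visit n pH σs + (1 - ρ) * visit n pL σs := by nlinarith
    set aH := rej pH σs with haHdef
    set aL := rej pL σs with haLdef
    set bH := rej pH σ with hbHdef
    set bL := rej pL σ with hbLdef
    have h0aH : 0 ≤ aH := rej_nonneg hH0 hH1 hσs
    have h0aL : 0 ≤ aL := rej_nonneg hL0 hL1 hσs
    have h0bH : 0 ≤ bH := rej_nonneg hH0 hH1 hσ
    have h0bL : 0 ≤ bL := rej_nonneg hL0 hL1 hσ
    have hbL1 : bL ≤ 1 := rej_le_one hL0 hσ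
    have hrejle : ∀ p : Fin m → ℝ, (∀ s, 0 ≤ p s) → rej p σ ≤ rej p σs := by
      intro p hp
      have := Finset.sum_le_sum (s := Finset.univ)
        (f := fun s => p s * σs s) (g := fun s => p s * σ s)
        (fun s _ => mul_le_mul_of_nonneg_left (hle s) (hp s))
      simp only [rej]
      linarith
    have hbHaH : bH ≤ aH := hrejle pH hH0
    have haHL : aH ≤ aL := by
      have := mono_sum_le hE hσs hmonos
      simp only [haHdef, haLdef, rej]
      linarith
    have hbHL : bH ≤ bL := by
      have := mono_sum_le hE hσ hmono
      simp only [hbHdef, hbLdef, rej]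
      linarith
    set XH := ∑ s, pH s * (σ s - σs s) with hXHdef
    set XL := ∑ s, pL s * (σ s - σs s) with hXLdef
    have hXH : aH - bH = XH := by
      simp only [haHdef, hbHdef, rej, hXHdef, mul_sub, Finset.sum_sub_distrib]
      ring
    have hXL : aL - bL = XL := by
      simp only [haLdef, hbLdef, rej, hXLdef, mul_sub, Finset.sum_sub_distrib]
      ring
    have hXH0 : 0 ≤ XH :=
      Finset.sum_nonneg fun s _ => mul_nonneg (hH0 s) (sub_nonneg.2 (hle s))
    have hXL0 : 0 ≤ XL :=
      Finset.sum_nonneg fun s _ => mul_nonneg (hL0 s) (sub_nonneg.2 (hle s))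
    -- per-signal equilibrium inequality
    have hper : ∀ s : Fin m,
        (1 - c) * ψ * (pH s * (σ s - σs s)) ≤ c * (1 - ψ) * (pL s * (σ s - σs s)) := by
      intro s
      rcases eq_or_lt_of_le (hle s) with he | hlt
      · rw [← he]
        simp
      · have h1 : σs s < 1 := lt_of_lt_of_le hlt (hσ s).2
        have hQ : post ψ pL pH s ≤ c := by
          by_contra h
          push_neg at h
          have := (heq.2 s).1 h
          linarith
        have hd := post_denom_pos hL0 hH0 hLH hψ0 hψ1 s
        rw [post, div_le_iff₀ hd] at hQ
        have h2 : (1 - c) * ψ * pH s ≤ c * (1 - ψ) * pL s := by nlinarith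
        nlinarith [mul_le_mul_of_nonneg_right h2 (le_of_lt (sub_pos.2 hlt))]
    have hsumineq : (1 - c) * ψ * XH ≤ c * (1 - ψ) * XL := by
      rw [hXHdef, hXLdef, Finset.mul_sum, Finset.mul_sum]
      exact Finset.sum_le_sum fun s _ => hper s
    have hkey : (1 - c) * ρ * XH * visit n pH σs ≤ c * (1 - ρ) * XL * visit n pL σs := by
      have e1 : (1 - c) * ρ * XH * visit n pH σs
          = ((1 - c) * ψ * XH) * (ρ * visit n pH σs + (1 - ρ) * visit n pL σs) := by
        linear_combination ((c - 1) * XH) * hψD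
      have e2 : c * (1 - ρ) * XL * visit n pL σs
          = (c * (1 - ψ) * XL) * (ρ * visit n pH σs + (1 - ρ) * visit n pL σs) := by
        linear_combination (-(c * XL)) * h1ψD
      rw [e1, e2]
      exact mul_le_mul_of_nonneg_right hsumineq hD.le
    set AH := ∑ k ∈ Finset.range n, aH ^ k * bH ^ (n - 1 - k) with hAHdef
    set AL := ∑ k ∈ Finset.range n, aL ^ k * bL ^ (n - 1 - k) with hALdef
    have hAH0 : 0 ≤ AH := Finset.sum_nonneg fun k _ =>
      mul_nonneg (pow_nonneg h0aH k) (pow_nonneg h0bH _)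
    have hAL0 : 0 ≤ AL := Finset.sum_nonneg fun k _ =>
      mul_nonneg (pow_nonneg h0aL k) (pow_nonneg h0bL _)
    have hratio : AH * visit n pL σs ≤ AL * visit n pH σs := by
      have h := geom_ratio n h0aH haHL h0bH hbHL hbL1
      have hninv : (0:ℝ) ≤ 1 / (n:ℝ) := by positivity
      calc AH * visit n pL σs
          = 1 / (n:ℝ) * ((∑ k ∈ Finset.range n, aH ^ k * bH ^ (n - 1 - k))
              * (∑ k ∈ Finset.range n, aL ^ k)) := by
            simp only [hAHdef, visit, ← haLdef]
            ring
        _ ≤ 1 / (n:ℝ) * ((∑ k ∈ Finset.range n, aL ^ k * bL ^ (n - 1 - k))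
              * (∑ k ∈ Finset.range n, aH ^ k)) := mul_le_mul_of_nonneg_left h hninv
        _ = AL * visit n pH σs := by
            simp only [hALdef, visit, ← haHdef]
            ring
    have gH : AH * XH = aH ^ n - bH ^ n := by
      rw [hAHdef, ← hXH]; exact geom_sum₂_mul aH bH n
    have gL : AL * XL = aL ^ n - bL ^ n := by
      rw [hALdef, ← hXL]; exact geom_sum₂_mul aL bL n
    have hgoal : surplus ρ c n pL pH σ
        = (1 - c) * ρ * (1 - bH ^ n) - c * (1 - ρ) * (1 - bL ^ n) := by
      simp only [surplus, ← hbHdef, ← hbLdef]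
    have hgoals : surplus ρ c n pL pH σs
        = (1 - c) * ρ * (1 - aH ^ n) - c * (1 - ρ) * (1 - aL ^ n) := by
      simp only [surplus, ← haHdef, ← haLdef]
    clear_value aH aL bH bL XH XL AH AL ψ
    have hfin : (1 - c) * ρ * XH * AH ≤ c * (1 - ρ) * XL * AL := by
      have hu0 : (0:ℝ) ≤ (1 - c) * ρ * XH :=
        mul_nonneg (mul_nonneg (by linarith) hρ0.le) hXH0
      have sa := mul_le_mul_of_nonneg_left hratio hu0
      have sb := mul_le_mul_of_nonneg_right hkey hAL0
      have h3 : ((1 - c) * ρ * XH * AH) * visit n pL σs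
          ≤ (c * (1 - ρ) * XL * AL) * visit n pL σs := by nlinarith [sa, sb]
      exact le_of_mul_le_mul_right h3 hνL
    have h1 : (1 - c) * ρ * XH * AH = (1 - c) * ρ * (aH ^ n - bH ^ n) := by
      rw [← gH]; ring
    have h2 : c * (1 - ρ) * XL * AL = c * (1 - ρ) * (aL ^ n - bL ^ n) := by
      rw [← gL]; ring
    have hfin' := hfin
    rw [h1, h2] at hfin'
    rw [hgoal, hgoals]
    linarith [hfin']
  refine ⟨main, fun σs σss heqs heqss hle => ?_⟩
  exact main σss σs heqss heqs.1 (equil_monotone ρ c hρ0 hρ1 n hn hE heqs) hle
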